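/- arXiv:2111.05296 — 4 statements merged into one kernel-verified Lean document; each statement's English description precedes it below -/
import Mathlib

section
/- Suppose a > 0 and b > 0. Then the matrix Â = [[−a L̂, b I], [−L̂, 0]] ∈ ℝ^{2(n−1)×2(n−1)} is Hurwitz: every eigenvalue of Â, regarded as a matrix over ℂ, has strictly negative real part. -/
/-!
If `(x, y)` is an eigenvector of `Â` for `μ`, eliminating `y` gives `μ² x + (a μ + b) L̂ x = 0`
with `x ≠ 0`. Pairing with `x̄` shows that `μ` is a root of `z² + a λ z + b λ` with
`λ = x̄ᵀ L̂ x / x̄ᵀ x > 0`, and such a root has negative real part.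
`L̂` is positive definite because `L̂ = Cᵀ C` with `C = Bᵀ U₁` injective: on a connected graph
the kernel of `Bᵀ` is spanned by `𝟏`, which is orthogonal to the range of `U₁`.
-/

open Matrix ComplexOrder

lemma Complex.re_neg_of_sq_add_mul_add_eq_zero {p q : ℝ} (hp : 0 < p) (hq : 0 < q) {z : ℂ}
    (hz : z ^ 2 + p * z + q = 0) : z.re < 0 := by
  have hre := congrArg Complex.re hz
  have him := congrArg Complex.im hz
  simp only [sq, add_re, add_im, mul_re, mul_im, ofReal_re, ofReal_im, zero_re, zero_im] at hre him
  replace him : z.im * (2 * z.re + p) = 0 := by linear_combination him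
  rcases mul_eq_zero.mp him with h | h
  · by_contra! hz_re
    nlinarith [mul_nonneg hz_re (add_nonneg hz_re hp.le)]
  · linarith

lemma Matrix.exists_mulVec_eq_smul_of_mem_spectrum {K ι : Type*} [Field K] [Fintype ι]
    [DecidableEq ι] {M : Matrix ι ι K} {μ : K} (hμ : μ ∈ spectrum K M) :
    ∃ v ≠ 0, M *ᵥ v = μ • v := by
  rw [← spectrum_toLin', ← Module.End.hasEigenvalue_iff_mem_spectrum] at hμ
  obtain ⟨v, hv⟩ := hμ.exists_hasEigenvector
  exact ⟨v, hv.2, hv.apply_eq_smul⟩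

theorem Matrix.PosDef.re_neg_of_mem_spectrum_fromBlocks {ι : Type*} [Fintype ι] [DecidableEq ι]
    {P : Matrix ι ι ℂ} (hP : P.PosDef) {a b : ℝ} (ha : 0 < a) (hb : 0 < b) {μ : ℂ}
    (hμ : μ ∈ spectrum ℂ (fromBlocks (-((a : ℂ) • P)) ((b : ℂ) • (1 : Matrix ι ι ℂ)) (-P) 0)) :
    μ.re < 0 := by
  obtain ⟨v, hv, hμv⟩ := exists_mulVec_eq_smul_of_mem_spectrum hμ
  obtain ⟨x, y, rfl⟩ : ∃ x y, v = Sum.elim x y :=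
    ⟨v ∘ Sum.inl, v ∘ Sum.inr, (Sum.elim_comp_inl_inr v).symm⟩
  rw [fromBlocks_mulVec] at hμv
  have hx_eq : -((a : ℂ) • P) *ᵥ x + ((b : ℂ) • (1 : Matrix ι ι ℂ)) *ᵥ y = μ • x :=
    funext fun i => congrFun hμv (Sum.inl i)
  have hy_eq : -P *ᵥ x + (0 : Matrix ι ι ℂ) *ᵥ y = μ • y :=
    funext fun i => congrFun hμv (Sum.inr i)
  simp only [neg_mulVec, smul_mulVec, one_mulVec, zero_mulVec, add_zero] at hx_eq hy_eq
  have hx : x ≠ 0 := by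
    rintro rfl
    have hy : y = 0 := by simpa [hb.ne'] using hx_eq
    exact hv (by rw [hy, Sum.elim_zero_zero])
  have hquad : μ ^ 2 • x + ((a : ℂ) * μ + b) • (P *ᵥ x) = 0 := by
    linear_combination (norm := module) -μ • hx_eq - (b : ℂ) • hy_eq
  obtain ⟨s, hs, hs_eq⟩ := RCLike.pos_iff_exists_ofReal.mp (dotProduct_star_self_pos_iff.mpr hx)
  obtain ⟨d, hd, hd_eq⟩ := RCLike.pos_iff_exists_ofReal.mp (hP.dotProduct_mulVec_pos hx)
  have hform := congrArg (star x ⬝ᵥ ·) hquad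
  simp only [dotProduct_add, dotProduct_smul, smul_eq_mul, dotProduct_zero, ← hs_eq, ← hd_eq]
    at hform
  refine Complex.re_neg_of_sq_add_mul_add_eq_zero (p := a * d / s) (q := b * d / s)
    (by positivity) (by positivity) ?_
  push_cast
  field_simp
  linear_combination hform

section Incidence

variable {R V E : Type*} [CommRing R] [Fintype V] [DecidableEq V] {src tgt : E → V}
  {B : Matrix V E R}

theorem Matrix.transpose_mulVec_apply_of_incidence
    (hB : ∀ i l, B i l = if i = src l then 1 else if i = tgt l then -1 else 0) {l : E}
    (hl : src l ≠ tgt l) (w : V → R) : (Bᵀ *ᵥ w) l = w (src l) - w (tgt l) := by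
  simp [mulVec, dotProduct, hB, ite_mul, Finset.sum_ite, Finset.filter_eq', Finset.filter_ne',
    hl.symm, sub_eq_add_neg]

theorem SimpleGraph.Preconnected.eq_of_incidence_transpose_mulVec_eq_zero {G : SimpleGraph V}
    (hG : G.Preconnected) (hadj : ∀ l, G.Adj (src l) (tgt l))
    (hsurj : ∀ e ∈ G.edgeSet, ∃ l, s(src l, tgt l) = e)
    (hB : ∀ i l, B i l = if i = src l then 1 else if i = tgt l then -1 else 0)
    {w : V → R} (hw : Bᵀ *ᵥ w = 0) (i j : V) : w i = w j := by
  have hedge : ∀ l, w (src l) = w (tgt l) := fun l ↦ by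
    rw [← sub_eq_zero, ← transpose_mulVec_apply_of_incidence hB (hadj l).ne, hw, Pi.zero_apply]
  have hstep : ∀ u v, G.Adj u v → w u = w v := fun u v huv ↦ by
    obtain ⟨l, hl⟩ := hsurj s(u, v) huv
    rcases Sym2.eq_iff.mp hl with ⟨rfl, rfl⟩ | ⟨rfl, rfl⟩
    exacts [hedge l, (hedge l).symm]
  obtain ⟨p⟩ := hG i j
  induction p with
  | nil => rfl
  | cons huv _ ih => exact (hstep _ _ huv).trans ih

theorem SimpleGraph.Connected.injective_incidence_transpose_mul_mulVec {ι : Type*} [Fintype ι]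
    [DecidableEq ι] {G : SimpleGraph V} (hG : G.Connected) (hadj : ∀ l, G.Adj (src l) (tgt l))
    (hsurj : ∀ e ∈ G.edgeSet, ∃ l, s(src l, tgt l) = e)
    (hB : ∀ i l, B i l = if i = src l then 1 else if i = tgt l then -1 else 0)
    {U : Matrix V ι R} (hU : Uᵀ * U = 1) (hU1 : Uᵀ *ᵥ (fun _ ↦ 1) = 0) :
    Function.Injective (Bᵀ * U).mulVec := by
  refine (injective_iff_map_eq_zero (mulVecLin (Bᵀ * U))).mpr fun z hz ↦ ?_
  rw [mulVecLin_apply, ← mulVec_mulVec] at hz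
  obtain ⟨v⟩ := hG.nonempty
  have hconst : U *ᵥ z = (U *ᵥ z) v • fun _ ↦ 1 := funext fun i ↦ by
    simpa using hG.preconnected.eq_of_incidence_transpose_mulVec_eq_zero hadj hsurj hB hz i v
  calc z = Uᵀ *ᵥ (U *ᵥ z) := by rw [mulVec_mulVec, hU, one_mulVec]
    _ = 0 := by rw [hconst, mulVec_smul, hU1, smul_zero]

end Incidence

theorem SimpleGraph.Connected.posDef_map_ofReal_transpose_mul_incidence_mul_transpose_mul
    {V E ι : Type*} [Fintype V] [DecidableEq V] [Fintype E] [Fintype ι] [DecidableEq ι]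
    {G : SimpleGraph V} (hG : G.Connected) {src tgt : E → V}
    (hadj : ∀ l, G.Adj (src l) (tgt l)) (hsurj : ∀ e ∈ G.edgeSet, ∃ l, s(src l, tgt l) = e)
    {B : Matrix V E ℝ} (hB : ∀ i l, B i l = if i = src l then 1 else if i = tgt l then -1 else 0)
    {U : Matrix V ι ℝ} (hU : Uᵀ * U = 1) (hU1 : Uᵀ *ᵥ (fun _ ↦ 1) = 0) :
    ((Uᵀ * (B * Bᵀ) * U).map Complex.ofReal).PosDef := by
  let f := Complex.ofRealHom
  have hC : Function.Injective ((B.map f)ᵀ * U.map f).mulVec :=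
    hG.injective_incidence_transpose_mul_mulVec hadj hsurj
      (fun i l ↦ by rw [map_apply, hB]; split_ifs <;> simp [f])
      (by rw [← transpose_map, ← Matrix.map_mul, hU, Matrix.map_one _ (map_zero f) (map_one f)])
      (funext fun i ↦ by
        simpa [f, hU1, transpose_map, Function.comp_def] using
          (RingHom.map_mulVec f Uᵀ (fun _ ↦ 1) i).symm)
  have hf : Function.Semiconj f star star := fun x ↦ (Complex.conj_ofReal x).symm
  convert PosDef.conjTranspose_mul_self _ hC using 1
  simp only [← conjTranspose_map _ hf, ← transpose_map, ← Matrix.map_mul,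
    conjTranspose_eq_transpose_of_trivial, transpose_mul, transpose_transpose, Matrix.mul_assoc]
  rfl

theorem stmt0_general
    (n m : ℕ)
    (G : SimpleGraph (Fin n)) (hG : G.Connected)
    (src tgt : Fin m → Fin n)
    (hadj : ∀ l, G.Adj (src l) (tgt l))
    (hsurj : ∀ e ∈ G.edgeSet, ∃ l : Fin m, s(src l, tgt l) = e)
    (B : Matrix (Fin n) (Fin m) ℝ)
    (hB : ∀ i l, B i l = if i = src l then (1 : ℝ) else if i = tgt l then -1 else 0)
    (L : Matrix (Fin n) (Fin n) ℝ) (hL : L = B * Bᵀ)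
    (U1 : Matrix (Fin n) (Fin (n - 1)) ℝ)
    (hU1 : U1ᵀ * U1 = 1)
    (hU1one : U1ᵀ *ᵥ (fun _ => (1 : ℝ)) = 0)
    (Lhat : Matrix (Fin (n - 1)) (Fin (n - 1)) ℝ) (hLhat : Lhat = U1ᵀ * L * U1)
    (a b : ℝ) (ha : 0 < a) (hb : 0 < b)
    (Ahat : Matrix (Fin (n - 1) ⊕ Fin (n - 1)) (Fin (n - 1) ⊕ Fin (n - 1)) ℝ)
    (hAhat : Ahat = Matrix.fromBlocks (-(a • Lhat)) (b • (1 : Matrix (Fin (n - 1)) (Fin (n - 1)) ℝ)) (-Lhat) 0)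
    :
    ∀ μ : ℂ, μ ∈ spectrum ℂ (Ahat.map Complex.ofReal) → μ.re < 0 := by
  intro μ hμ
  have hP := hG.posDef_map_ofReal_transpose_mul_incidence_mul_transpose_mul hadj hsurj hB hU1 hU1one
  rw [← hL, ← hLhat] at hP
  refine hP.re_neg_of_mem_spectrum_fromBlocks ha hb ?_
  convert hμ using 2
  rw [hAhat, fromBlocks_map]
  congr 1
  · ext; simp
  · simp [smul_one_eq_diagonal]
  · ext; simp

theorem stmt0
    (n m : ℕ) (hn : 2 ≤ n)
    (G : SimpleGraph (Fin n)) (hG : G.Connected)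
    (src tgt : Fin m → Fin n)
    (hadj : ∀ l, G.Adj (src l) (tgt l))
    (hinj : ∀ l l' : Fin m, s(src l, tgt l) = s(src l', tgt l') → l = l')
    (hsurj : ∀ e ∈ G.edgeSet, ∃ l : Fin m, s(src l, tgt l) = e)
    (B : Matrix (Fin n) (Fin m) ℝ)
    (hB : ∀ i l, B i l = if i = src l then (1 : ℝ) else if i = tgt l then -1 else 0)
    (L : Matrix (Fin n) (Fin n) ℝ) (hL : L = B * Bᵀ)
    (U1 : Matrix (Fin n) (Fin (n - 1)) ℝ)
    (hU1 : U1ᵀ * U1 = 1)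
    (hU1one : U1ᵀ *ᵥ (fun _ => (1 : ℝ)) = 0)
    (Lhat : Matrix (Fin (n - 1)) (Fin (n - 1)) ℝ) (hLhat : Lhat = U1ᵀ * L * U1)
    (a b : ℝ) (ha : 0 < a) (hb : 0 < b)
    (Ahat : Matrix (Fin (n - 1) ⊕ Fin (n - 1)) (Fin (n - 1) ⊕ Fin (n - 1)) ℝ)
    (hAhat : Ahat = Matrix.fromBlocks (-(a • Lhat)) (b • (1 : Matrix (Fin (n - 1)) (Fin (n - 1)) ℝ)) (-Lhat) 0)
    :
    ∀ μ : ℂ, μ ∈ spectrum ℂ (Ahat.map Complex.ofReal) → μ.re < 0 :=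
  stmt0_general n m G hG src tgt hadj hsurj B hB L hL U1 hU1 hU1one Lhat hLhat a b ha hb Ahat hAhat
end

section
/- The function t ↦ ‖δ(t)‖² is integrable on (0, ∞) and ∫₀^∞ ‖δ(t)‖² dt = (1/(2ab)) (ω^u)ᵀ L† ω^u. -/
/-!
Write `x = (p, q)` and let `P = L†L` be the orthogonal projection onto the range of `L`.
The components `u = P p` and `v = P (b q + ωᵘ)` obey `u' = -a L u + v`, `v' = -b L u`, and
`‖δ‖² = ‖Bᵀ p‖² = uᵀ L u`. The energy `E = b ‖u‖² + vᵀ L† v` satisfies `E' = -2ab · uᵀ L u`,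
so the integral is `(E 0 - E ∞) / (2ab)` with `E 0 = (ωᵘ)ᵀ L† ωᵘ`.

That `E ∞ = 0` comes from coercivity on the range of `L` (`u = L†B · Bᵀu` and
`v = B · BᵀL†v`): for small `ε > 0` the perturbed energy `E - ε uᵀ L† v` is a strict Lyapunov
function, hence decays exponentially by Grönwall's inequality.
-/

open Matrix MeasureTheory Filter Topology

namespace Matrix

lemma PosSemidef.isSymm {ι : Type*} {L : Matrix ι ι ℝ} (hL : L.PosSemidef) : L.IsSymm :=
  isHermitian_iff_isSymm.mp hL.isHermitian

variable {ι κ : Type*} [Fintype ι] [Fintype κ]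

lemma dotProduct_self_nonneg (x : ι → ℝ) : 0 ≤ x ⬝ᵥ x :=
  Finset.sum_nonneg fun i _ => mul_self_nonneg (x i)

lemma dotProduct_sq_le (x y : ι → ℝ) : (x ⬝ᵥ y) ^ 2 ≤ (x ⬝ᵥ x) * (y ⬝ᵥ y) := by
  simpa only [dotProduct, sq] using Finset.sum_mul_sq_le_sq_mul_sq Finset.univ x y

lemma mulVec_dotProduct_mulVec_self_le (N : Matrix κ ι ℝ) (z : ι → ℝ) :
    N *ᵥ z ⬝ᵥ N *ᵥ z ≤ (∑ k, N k ⬝ᵥ N k) * (z ⬝ᵥ z) := by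
  rw [Finset.sum_mul]
  exact Finset.sum_le_sum fun k _ => (sq _).symm.trans_le (dotProduct_sq_le (N k) z)

lemma dotProduct_mulVec_sq_le (N : Matrix κ ι ℝ) (x : κ → ℝ) (y : ι → ℝ) :
    (x ⬝ᵥ N *ᵥ y) ^ 2 ≤ (∑ k, N k ⬝ᵥ N k) * (x ⬝ᵥ x) * (y ⬝ᵥ y) :=
  calc (x ⬝ᵥ N *ᵥ y) ^ 2 ≤ (x ⬝ᵥ x) * (N *ᵥ y ⬝ᵥ N *ᵥ y) := dotProduct_sq_le _ _
    _ ≤ (x ⬝ᵥ x) * ((∑ k, N k ⬝ᵥ N k) * (y ⬝ᵥ y)) :=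
      mul_le_mul_of_nonneg_left (mulVec_dotProduct_mulVec_self_le N y) (dotProduct_self_nonneg x)
    _ = _ := by ring

lemma dotProduct_mul_transpose_mulVec (B : Matrix ι κ ℝ) (x : ι → ℝ) :
    x ⬝ᵥ (B * Bᵀ) *ᵥ x = Bᵀ *ᵥ x ⬝ᵥ Bᵀ *ᵥ x := by
  rw [← mulVec_mulVec, dotProduct_mulVec, mulVec_transpose]

lemma dotProduct_self_le_of_mulVec_mul_transpose_mulVec_eq (N : Matrix ι ι ℝ) (B : Matrix ι κ ℝ)
    {x : ι → ℝ} (hx : N *ᵥ (B * Bᵀ) *ᵥ x = x) :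
    x ⬝ᵥ x ≤ (∑ i, (N * B) i ⬝ᵥ (N * B) i) * (x ⬝ᵥ (B * Bᵀ) *ᵥ x) := by
  have hx' : (N * B) *ᵥ Bᵀ *ᵥ x = x := by rw [mulVec_mulVec, Matrix.mul_assoc, ← mulVec_mulVec, hx]
  calc x ⬝ᵥ x = (N * B) *ᵥ Bᵀ *ᵥ x ⬝ᵥ (N * B) *ᵥ Bᵀ *ᵥ x := by rw [hx']
    _ ≤ _ := by rw [dotProduct_mul_transpose_mulVec]; exact mulVec_dotProduct_mulVec_self_le _ _

lemma dotProduct_self_le_of_mul_transpose_mulVec_mulVec_eq (N : Matrix ι ι ℝ) (B : Matrix ι κ ℝ)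
    {y : ι → ℝ} (hy : (B * Bᵀ) *ᵥ N *ᵥ y = y) :
    y ⬝ᵥ y ≤ (∑ i, B i ⬝ᵥ B i) * (y ⬝ᵥ N *ᵥ y) := by
  have hy' : y ⬝ᵥ N *ᵥ y = N *ᵥ y ⬝ᵥ (B * Bᵀ) *ᵥ N *ᵥ y :=
    calc y ⬝ᵥ N *ᵥ y = (B * Bᵀ) *ᵥ N *ᵥ y ⬝ᵥ N *ᵥ y := by rw [hy]
      _ = _ := dotProduct_comm _ _
  calc y ⬝ᵥ y = B *ᵥ Bᵀ *ᵥ N *ᵥ y ⬝ᵥ B *ᵥ Bᵀ *ᵥ N *ᵥ y := by rw [mulVec_mulVec, hy]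
    _ ≤ _ := by
      rw [hy', dotProduct_mul_transpose_mulVec]; exact mulVec_dotProduct_mulVec_self_le _ _

lemma IsSymm.mulVec_dotProduct {L : Matrix ι ι ℝ} (hL : L.IsSymm) (x y : ι → ℝ) :
    L *ᵥ x ⬝ᵥ y = x ⬝ᵥ L *ᵥ y := by
  conv_lhs => rw [← hL.eq]
  rw [mulVec_transpose, dotProduct_mulVec]

lemma PosSemidef.dotProduct_mulVec_self_nonneg {L : Matrix ι ι ℝ} (hL : L.PosSemidef)
    (x : ι → ℝ) : 0 ≤ x ⬝ᵥ L *ᵥ x := by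
  simpa using hL.dotProduct_mulVec_nonneg x

lemma posSemidef_mul_transpose_self (B : Matrix ι κ ℝ) : (B * Bᵀ).PosSemidef := by
  simpa [conjTranspose_eq_transpose_of_trivial] using posSemidef_self_mul_conjTranspose B

structure IsMoorePenroseInverse {m n : Type*} [Fintype m] [Fintype n]
    (L : Matrix m n ℝ) (M : Matrix n m ℝ) : Prop where
  mul_mul_left : L * M * L = L
  mul_mul_right : M * L * M = M
  isSymm_mul_left : (L * M).IsSymm
  isSymm_mul_right : (M * L).IsSymm

namespace IsMoorePenroseInverse

variable {L M : Matrix ι ι ℝ}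

theorem mul_comm (hM : IsMoorePenroseInverse L M) (hL : L.IsSymm) : L * M = M * L := by
  have hLM : Mᵀ * L = L * M := by rw [← hM.isSymm_mul_left.eq, Matrix.transpose_mul, hL.eq]
  have hML : L * Mᵀ = M * L := by rw [← hM.isSymm_mul_right.eq, Matrix.transpose_mul, hL.eq]
  calc L * M = Mᵀ * L * (M * L) := by
        rw [Matrix.mul_assoc Mᵀ, ← Matrix.mul_assoc L, hM.mul_mul_left, hLM]
    _ = L * M * L * Mᵀ := by rw [hLM, Matrix.mul_assoc _ L, hML, Matrix.mul_assoc]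
    _ = M * L := by rw [hM.mul_mul_left, hML]

theorem isSymm (hM : IsMoorePenroseInverse L M) (hL : L.IsSymm) : M.IsSymm :=
  calc Mᵀ = (M * L * M)ᵀ := by rw [hM.mul_mul_right]
    _ = Mᵀ * (M * L) := by rw [Matrix.transpose_mul, hM.isSymm_mul_right.eq]
    _ = (L * M)ᵀ * M := by rw [← hM.mul_comm hL, Matrix.transpose_mul, hL.eq, Matrix.mul_assoc]
    _ = M := by rw [hM.isSymm_mul_left.eq, hM.mul_comm hL, hM.mul_mul_right]

theorem posSemidef (hM : IsMoorePenroseInverse L M) (hL : L.PosSemidef) : M.PosSemidef := by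
  refine .of_dotProduct_mulVec_nonneg (isHermitian_iff_isSymm.mpr (hM.isSymm hL.isSymm)) fun x => ?_
  rw [star_trivial, ← hM.mul_mul_right, ← mulVec_mulVec, ← mulVec_mulVec,
    ← (hM.isSymm hL.isSymm).mulVec_dotProduct]
  exact hL.dotProduct_mulVec_self_nonneg _

end IsMoorePenroseInverse

end Matrix

section Calculus

variable {ι κ : Type*} [Fintype ι]

lemma HasDerivAt.dotProduct {f g : ℝ → ι → ℝ} {f' g' : ι → ℝ} {t : ℝ}
    (hf : HasDerivAt f f' t) (hg : HasDerivAt g g' t) :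
    HasDerivAt (fun s => f s ⬝ᵥ g s) (f' ⬝ᵥ g t + f t ⬝ᵥ g') t := by
  rw [hasDerivAt_pi] at hf hg
  simp only [_root_.dotProduct, ← Finset.sum_add_distrib]
  exact HasDerivAt.fun_sum fun i _ => (hf i).fun_mul (hg i)

lemma HasDerivAt.mulVec (N : Matrix κ ι ℝ) {f : ℝ → ι → ℝ} {f' : ι → ℝ} {t : ℝ}
    (hf : HasDerivAt f f' t) : HasDerivAt (fun s => N *ᵥ f s) (N *ᵥ f') t := by
  rw [hasDerivAt_pi] at hf ⊢
  exact fun k => HasDerivAt.fun_sum fun i _ => (hf i).const_mul (N k i)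

end Calculus

lemma le_mul_exp_of_hasDerivAt_le_neg_mul {f f' : ℝ → ℝ} {c : ℝ}
    (hf : ∀ t, 0 ≤ t → HasDerivAt f (f' t) t) (hbound : ∀ t, 0 ≤ t → f' t ≤ -c * f t)
    {t : ℝ} (ht : 0 ≤ t) : f t ≤ f 0 * Real.exp (-c * t) := by
  have := le_gronwallBound_of_liminf_deriv_right_le (f' := f') (δ := f 0) (K := -c) (ε := 0)
    (b := t) (fun s hs => (hf s hs.1).continuousAt.continuousWithinAt)
    (fun s hs _ hr => (hf s hs.1).hasDerivWithinAt.liminf_right_slope_le hr) le_rfl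
    (fun s hs => by simpa using hbound s hs.1) t ⟨ht, le_rfl⟩
  simpa [gronwallBound_ε0] using this

/-- Pointwise estimates for `W = E - ε X` along the projected flow, where `s = ‖u‖²`, `r = ‖v‖²`,
`α = uᵀ L u`, `β = vᵀ M v`, `γ = u ⬝ v` and `X = uᵀ M v`: `E ≤ 2 W` and `W' ≤ -c W`. -/
lemma exists_lyapunov_rate {a b Λ R K : ℝ} (ha : 0 < a) (hb : 0 < b) (hK : 0 ≤ K) :
    ∃ ε > 0, ∃ c > 0, ∀ ⦃s r α β γ X : ℝ⦄, 0 ≤ s → 0 ≤ r → 0 ≤ α → 0 ≤ β →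
      s ≤ Λ * α → r ≤ R * β → γ ^ 2 ≤ s * r → X ^ 2 ≤ K * s * r →
      b * s + β ≤ 2 * (b * s + β - ε * X) ∧
        -(2 * a * b * α) + ε * (a * γ - β + b * s) ≤ -(c * (b * s + β - ε * X)) := by
  have small : ∀ {f : ℝ → ℝ}, Continuous f → f 0 = 0 → ∀ {d : ℝ}, 0 < d →
      ∀ᶠ ε in 𝓝[>] (0 : ℝ), 0 < ε ∧ f ε < d := fun hf hf0 _ hd =>
    eventually_mem_nhdsWithin.and <| nhdsWithin_le_nhds <| (hf.tendsto' 0 0 hf0).eventually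
      (gt_mem_nhds hd)
  obtain ⟨ε, ⟨hε, hεK⟩, ⟨-, hεΛ⟩, ⟨-, hεR⟩⟩ :=
    ((small (f := fun ε => ε ^ 2 * (K * R)) (by fun_prop) (by simp) hb).and
      ((small (f := fun ε => ε * Λ) (by fun_prop) (by simp) (half_pos ha)).and
        (small (f := fun ε => ε * (a * Λ * R)) (by fun_prop) (by simp) hb))).exists
  obtain ⟨c, ⟨hc, hcΛ⟩, ⟨-, hcε⟩⟩ :=
    ((small (f := fun c => 3 * c * Λ) (by fun_prop) (by simp) (mul_pos two_pos ha)).and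
      (small (f := fun c => 3 * c) (by fun_prop) (by simp) hε)).exists
  refine ⟨ε, hε, c, hc, fun s r α β γ X hs hr hα hβ hsα hrβ hγ hX => ?_⟩
  have hΛα : 0 ≤ Λ * α := hs.trans hsα
  have hsr : s * r ≤ Λ * α * (R * β) := mul_le_mul hsα hrβ hr hΛα
  have hX' : |2 * ε * X| ≤ b * s + β := by
    refine abs_le_of_sq_le_sq' ?_ (by positivity) |> abs_le.mpr
    have h1 : ε ^ 2 * X ^ 2 ≤ ε ^ 2 * (K * s * r) := by gcongr
    have h2 : K * s * r ≤ K * s * (R * β) := by gcongr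
    nlinarith [mul_le_mul_of_nonneg_right hεK.le (mul_nonneg hs hβ), sq_nonneg (b * s - β)]
  have hγ' : 2 * ε * a * γ ≤ a * b * α + ε * β := by
    refine (abs_le.mp (abs_le_of_sq_le_sq' ?_ (by positivity) |> abs_le.mpr)).2
    have h1 : (ε * a) ^ 2 * γ ^ 2 ≤ (ε * a) ^ 2 * (Λ * α * (R * β)) := by
      gcongr; exact hγ.trans hsr
    have h2 : ε * a * (ε * (a * Λ * R)) * (α * β) ≤ ε * a * b * (α * β) := by gcongr
    nlinarith [sq_nonneg (a * b * α - ε * β)]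
  have hbs : ε * b * s ≤ a * b * α / 2 := by
    have : ε * Λ * (b * α) ≤ a / 2 * (b * α) := by gcongr
    nlinarith [mul_le_mul_of_nonneg_left hsα (mul_pos hε hb).le]
  have hcV : c * (b * s + β - ε * X) ≤ a * b * α + ε * β / 2 := by
    have h1 : c * (-(ε * X)) ≤ c * ((b * s + β) / 2) := by
      gcongr; linarith [neg_abs_le (2 * ε * X)]
    have h2 : 3 * c * Λ * (b * α) ≤ 2 * a * (b * α) := by gcongr
    nlinarith [mul_le_mul_of_nonneg_left hsα (mul_pos hc hb).le]
  exact ⟨by linarith [le_abs_self (2 * ε * X)], by linarith⟩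

section LaplacianFlow

variable {ι : Type*} [Fintype ι] {L M : Matrix ι ι ℝ} {a b t : ℝ} {u v : ℝ → ι → ℝ}

theorem hasDerivAt_energy (hL : L.IsSymm) (hM : M.IsSymm)
    (hu : HasDerivAt u (-(a • L *ᵥ u t) + v t) t) (hv : HasDerivAt v (-(b • L *ᵥ u t)) t)
    (hLv : L *ᵥ M *ᵥ v t = v t) :
    HasDerivAt (fun s => b * (u s ⬝ᵥ u s) + v s ⬝ᵥ M *ᵥ v s)
      (-(2 * a * b * (u t ⬝ᵥ L *ᵥ u t))) t := by
  have hvMLu : v t ⬝ᵥ M *ᵥ L *ᵥ u t = u t ⬝ᵥ v t := by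
    rw [← hM.mulVec_dotProduct, ← hL.mulVec_dotProduct, hLv, dotProduct_comm]
  refine (((hu.dotProduct hu).const_mul b).fun_add (hv.dotProduct (hv.mulVec M))).congr_deriv ?_
  simp only [add_dotProduct, dotProduct_add, neg_dotProduct, dotProduct_neg, smul_dotProduct,
    dotProduct_smul, smul_eq_mul, mulVec_neg, mulVec_smul, hL.mulVec_dotProduct, hLv, hvMLu,
    dotProduct_comm (v t) (u t)]
  ring

theorem hasDerivAt_cross (hL : L.IsSymm)
    (hu : HasDerivAt u (-(a • L *ᵥ u t) + v t) t) (hv : HasDerivAt v (-(b • L *ᵥ u t)) t)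
    (hMu : M *ᵥ L *ᵥ u t = u t) (hLv : L *ᵥ M *ᵥ v t = v t) :
    HasDerivAt (fun s => u s ⬝ᵥ M *ᵥ v s)
      (-(a * (u t ⬝ᵥ v t)) + v t ⬝ᵥ M *ᵥ v t - b * (u t ⬝ᵥ u t)) t := by
  refine (hu.dotProduct (hv.mulVec M)).congr_deriv ?_
  simp only [add_dotProduct, dotProduct_neg, neg_dotProduct, smul_dotProduct, smul_eq_mul,
    mulVec_neg, mulVec_smul, dotProduct_smul, hMu, hL.mulVec_dotProduct, hLv]
  ring

theorem tendsto_energy_atTop (hL : L.PosSemidef) (hM : M.PosSemidef) (ha : 0 < a) (hb : 0 < b)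
    (hu : ∀ t, 0 ≤ t → HasDerivAt u (-(a • L *ᵥ u t) + v t) t)
    (hv : ∀ t, 0 ≤ t → HasDerivAt v (-(b • L *ᵥ u t)) t)
    (hMu : ∀ t, M *ᵥ L *ᵥ u t = u t) (hLv : ∀ t, L *ᵥ M *ᵥ v t = v t) {Λ R : ℝ}
    (hΛ : ∀ t, u t ⬝ᵥ u t ≤ Λ * (u t ⬝ᵥ L *ᵥ u t))
    (hR : ∀ t, v t ⬝ᵥ v t ≤ R * (v t ⬝ᵥ M *ᵥ v t)) :
    Tendsto (fun t => b * (u t ⬝ᵥ u t) + v t ⬝ᵥ M *ᵥ v t) atTop (𝓝 0) := by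
  obtain ⟨ε, hε, c, hc, hest⟩ := exists_lyapunov_rate (Λ := Λ) (R := R) ha hb
    (Finset.sum_nonneg fun i _ => dotProduct_self_nonneg (M i))
  set W := fun t => b * (u t ⬝ᵥ u t) + v t ⬝ᵥ M *ᵥ v t - ε * (u t ⬝ᵥ M *ᵥ v t)
  have hEW t := hest (dotProduct_self_nonneg (u t)) (dotProduct_self_nonneg (v t))
    (hL.dotProduct_mulVec_self_nonneg (u t)) (hM.dotProduct_mulVec_self_nonneg (v t)) (hΛ t) (hR t)
    (dotProduct_sq_le _ _) (dotProduct_mulVec_sq_le M (u t) (v t))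
  have hW t (ht : 0 ≤ t) : HasDerivAt W (-(2 * a * b * (u t ⬝ᵥ L *ᵥ u t)) +
      ε * (a * (u t ⬝ᵥ v t) - v t ⬝ᵥ M *ᵥ v t + b * (u t ⬝ᵥ u t))) t :=
    ((hasDerivAt_energy hL.isSymm hM.isSymm (hu t ht) (hv t ht) (hLv t)).fun_sub
      ((hasDerivAt_cross hL.isSymm (hu t ht) (hv t ht) (hMu t) (hLv t)).const_mul ε)).congr_deriv
      (by ring)
  have hdecay t (ht : 0 ≤ t) : W t ≤ W 0 * Real.exp (-c * t) :=
    le_mul_exp_of_hasDerivAt_le_neg_mul hW (fun t _ => (hEW t).2.trans_eq (neg_mul c _).symm) ht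
  have hbound : Tendsto (fun t => 2 * (W 0 * Real.exp (-c * t))) atTop (𝓝 0) := by
    simpa using ((Real.tendsto_exp_neg_atTop_nhds_zero.comp
      (tendsto_id.const_mul_atTop hc)).const_mul (W 0)).const_mul 2
  refine tendsto_of_tendsto_of_tendsto_of_le_of_le' tendsto_const_nhds hbound
    (.of_forall fun t => ?_) ((eventually_ge_atTop 0).mono fun t ht => ?_)
  · have := hM.dotProduct_mulVec_self_nonneg (v t)
    have := dotProduct_self_nonneg (u t)
    positivity
  · linarith [(hEW t).1, hdecay t ht]

theorem integrableOn_Ioi_and_integral_eq_energy (hL : L.PosSemidef) (hM : M.PosSemidef)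
    (ha : 0 < a) (hb : 0 < b)
    (hu : ∀ t, 0 ≤ t → HasDerivAt u (-(a • L *ᵥ u t) + v t) t)
    (hv : ∀ t, 0 ≤ t → HasDerivAt v (-(b • L *ᵥ u t)) t)
    (hMu : ∀ t, M *ᵥ L *ᵥ u t = u t) (hLv : ∀ t, L *ᵥ M *ᵥ v t = v t) {Λ R : ℝ}
    (hΛ : ∀ t, u t ⬝ᵥ u t ≤ Λ * (u t ⬝ᵥ L *ᵥ u t))
    (hR : ∀ t, v t ⬝ᵥ v t ≤ R * (v t ⬝ᵥ M *ᵥ v t)) :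
    IntegrableOn (fun t => u t ⬝ᵥ L *ᵥ u t) (Set.Ioi 0) ∧
      ∫ t in Set.Ioi 0, u t ⬝ᵥ L *ᵥ u t = (b * (u 0 ⬝ᵥ u 0) + v 0 ⬝ᵥ M *ᵥ v 0) / (2 * a * b) := by
  have hderiv : ∀ t ∈ Set.Ici (0 : ℝ), HasDerivAt
      (fun t => -(b * (u t ⬝ᵥ u t) + v t ⬝ᵥ M *ᵥ v t) / (2 * a * b)) (u t ⬝ᵥ L *ᵥ u t) t :=
    fun t ht => ((hasDerivAt_energy hL.isSymm hM.isSymm (hu t ht) (hv t ht) (hLv t)).neg.div_const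
      _).congr_deriv (by field_simp)
  have hnonneg : ∀ t ∈ Set.Ioi (0 : ℝ), 0 ≤ u t ⬝ᵥ L *ᵥ u t :=
    fun t _ => hL.dotProduct_mulVec_self_nonneg _
  have hlim : Tendsto (fun t => -(b * (u t ⬝ᵥ u t) + v t ⬝ᵥ M *ᵥ v t) / (2 * a * b)) atTop
      (𝓝 0) := by
    simpa using (tendsto_energy_atTop hL hM ha hb hu hv hMu hLv hΛ hR).neg.div_const (2 * a * b)
  refine ⟨integrableOn_Ioi_deriv_of_nonneg' hderiv hnonneg hlim, ?_⟩
  rw [integral_Ioi_of_hasDerivAt_of_nonneg' hderiv hnonneg hlim]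
  ring

end LaplacianFlow

section ConsensusFlow

variable {ι κ : Type*} [Fintype ι] [Fintype κ] {a b : ℝ}

lemma hasDerivAt_comp_inl_inr [DecidableEq ι] {L : Matrix ι ι ℝ} {ω : ι → ℝ}
    {x : ℝ → ι ⊕ ι → ℝ} {t : ℝ}
    (hx : HasDerivAt x (fromBlocks (-(a • L)) (b • (1 : Matrix ι ι ℝ)) (-L) 0 *ᵥ x t +
      fromRows (1 : Matrix ι ι ℝ) 0 *ᵥ ω) t) :
    HasDerivAt (fun s => x s ∘ Sum.inl) (-(a • L *ᵥ (x t ∘ Sum.inl)) + b • (x t ∘ Sum.inr) + ω) t ∧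
      HasDerivAt (fun s => x s ∘ Sum.inr) (-(L *ᵥ (x t ∘ Sum.inl))) t := by
  rw [fromBlocks_mulVec, fromRows_mulVec, hasDerivAt_pi] at hx
  exact ⟨hasDerivAt_pi.2 fun i => by simpa [neg_mulVec, smul_mulVec] using hx (Sum.inl i),
    hasDerivAt_pi.2 fun i => by simpa [neg_mulVec] using hx (Sum.inr i)⟩

theorem integrableOn_and_integral_transpose_mulVec_of_hasDerivAt {B : Matrix ι κ ℝ}
    {M : Matrix ι ι ℝ} (hM : (B * Bᵀ).IsMoorePenroseInverse M) (ha : 0 < a) (hb : 0 < b)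
    {ω : ι → ℝ} {p q : ℝ → ι → ℝ} (hp0 : p 0 = 0) (hq0 : q 0 = 0)
    (hp : ∀ t, 0 ≤ t → HasDerivAt p (-(a • (B * Bᵀ) *ᵥ p t) + b • q t + ω) t)
    (hq : ∀ t, 0 ≤ t → HasDerivAt q (-((B * Bᵀ) *ᵥ p t)) t) :
    IntegrableOn (fun t => Bᵀ *ᵥ p t ⬝ᵥ Bᵀ *ᵥ p t) (Set.Ioi 0) ∧
      ∫ t in Set.Ioi 0, Bᵀ *ᵥ p t ⬝ᵥ Bᵀ *ᵥ p t = (ω ⬝ᵥ M *ᵥ ω) / (2 * a * b) := by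
  set L := B * Bᵀ
  have hL : L.PosSemidef := posSemidef_mul_transpose_self B
  have hcomm := hM.mul_comm hL.isSymm
  have hPL : M * L * L = L := by rw [← hcomm, hM.mul_mul_left]
  have hLP : L * (M * L) = L := by rw [← Matrix.mul_assoc, hM.mul_mul_left]
  have hMP : M * (M * L) = M := by rw [← hcomm, ← Matrix.mul_assoc, hM.mul_mul_right]
  set u := fun t => (M * L) *ᵥ p t
  set v := fun t => (M * L) *ᵥ (b • q t + ω)
  have hLu t : L *ᵥ u t = L *ᵥ p t := by simp only [u, mulVec_mulVec, hLP]
  have hu t (ht : 0 ≤ t) : HasDerivAt u (-(a • L *ᵥ u t) + v t) t :=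
    ((hp t ht).mulVec _).congr_deriv (by
      simp only [hLu, v, mulVec_add, mulVec_neg, mulVec_smul, mulVec_mulVec, hPL]; abel)
  have hv t (ht : 0 ≤ t) : HasDerivAt v (-(b • L *ᵥ u t)) t :=
    ((((hq t ht).const_smul b).add_const ω).mulVec _).congr_deriv (by
      simp only [hLu, mulVec_smul, mulVec_neg, mulVec_mulVec, hPL, smul_neg])
  have hMu t : M *ᵥ L *ᵥ u t = u t := by simp only [u, mulVec_mulVec, hLP]
  have hLv t : L *ᵥ M *ᵥ v t = v t := by
    simp only [v, mulVec_mulVec, ← Matrix.mul_assoc, hcomm]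
    simp only [Matrix.mul_assoc, hLP]
  have hpu t : Bᵀ *ᵥ p t ⬝ᵥ Bᵀ *ᵥ p t = u t ⬝ᵥ L *ᵥ u t := by
    rw [← dotProduct_mul_transpose_mulVec, ← hLu, ← hL.isSymm.mulVec_dotProduct, ← hLu,
      hL.isSymm.mulVec_dotProduct]
  obtain ⟨hint, hval⟩ := integrableOn_Ioi_and_integral_eq_energy hL (hM.posSemidef hL) ha hb hu hv
    hMu hLv (fun t => dotProduct_self_le_of_mulVec_mul_transpose_mulVec_eq M B (hMu t))
    (fun t => dotProduct_self_le_of_mul_transpose_mulVec_mulVec_eq M B (hLv t))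
  simp only [hpu]
  refine ⟨hint, hval.trans ?_⟩
  have hv0 : v 0 = (M * L) *ᵥ ω := by simp [v, hq0]
  rw [show u 0 = 0 by simp [u, hp0], hv0, dotProduct_zero, mulVec_mulVec, hMP,
    hM.isSymm_mul_right.mulVec_dotProduct, mulVec_mulVec, hM.mul_mul_right]
  ring

end ConsensusFlow

theorem stmt2_general
    (n m : ℕ)
    (B : Matrix (Fin n) (Fin m) ℝ)
    (L : Matrix (Fin n) (Fin n) ℝ) (hL : L = B * Bᵀ)
    (Ldag : Matrix (Fin n) (Fin n) ℝ)
    (hd1 : L * Ldag * L = L) (hd2 : Ldag * L * Ldag = Ldag)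
    (hd3 : (L * Ldag)ᵀ = L * Ldag) (hd4 : (Ldag * L)ᵀ = Ldag * L)
    (a b : ℝ) (ha : 0 < a) (hb : 0 < b)
    (ωu : Fin n → ℝ)
    (A : Matrix (Fin n ⊕ Fin n) (Fin n ⊕ Fin n) ℝ)
    (hA : A = Matrix.fromBlocks (-(a • L)) (b • (1 : Matrix (Fin n) (Fin n) ℝ)) (-L) 0)
    (B2 : Matrix (Fin n ⊕ Fin n) (Fin n) ℝ)
    (hB2 : B2 = Matrix.fromRows (1 : Matrix (Fin n) (Fin n) ℝ) 0)
    (C2 : Matrix (Fin m) (Fin n ⊕ Fin n) ℝ)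
    (hC2 : C2 = Matrix.fromCols (-Bᵀ) 0)
    (x : ℝ → (Fin n ⊕ Fin n) → ℝ)
    (hx0 : x 0 = 0)
    (hx : ∀ t : ℝ, 0 ≤ t → HasDerivAt x (A *ᵥ x t + B2 *ᵥ ωu) t)
    (δ : ℝ → Fin m → ℝ) (hδ : ∀ t, δ t = C2 *ᵥ x t)
    :
    IntegrableOn (fun t => ∑ l, (δ t l) ^ 2) (Set.Ioi (0 : ℝ)) ∧
      ∫ t in Set.Ioi (0 : ℝ), (∑ l, (δ t l) ^ 2) =
        (1 / (2 * a * b)) * (ωu ⬝ᵥ (Ldag *ᵥ ωu)) := by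
  subst hL hA hB2 hC2
  have hδ' t : ∑ l, δ t l ^ 2 = Bᵀ *ᵥ (x t ∘ Sum.inl) ⬝ᵥ Bᵀ *ᵥ (x t ∘ Sum.inl) := by
    simp [hδ, fromCols_mulVec, neg_mulVec, dotProduct, sq]
  obtain ⟨hint, hval⟩ := integrableOn_and_integral_transpose_mulVec_of_hasDerivAt
    ⟨hd1, hd2, hd3, hd4⟩ ha hb (p := fun t => x t ∘ Sum.inl) (q := fun t => x t ∘ Sum.inr)
    (by simp [hx0]) (by simp [hx0]) (fun t ht => (hasDerivAt_comp_inl_inr (hx t ht)).1)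
    (fun t ht => (hasDerivAt_comp_inl_inr (hx t ht)).2)
  simp only [hδ']
  exact ⟨hint, by rw [hval]; ring⟩

theorem stmt2
    (n m : ℕ) (hn : 2 ≤ n)
    (G : SimpleGraph (Fin n)) (hG : G.Connected)
    (src tgt : Fin m → Fin n)
    (hadj : ∀ l, G.Adj (src l) (tgt l))
    (hinj : ∀ l l' : Fin m, s(src l, tgt l) = s(src l', tgt l') → l = l')
    (hsurj : ∀ e ∈ G.edgeSet, ∃ l : Fin m, s(src l, tgt l) = e)
    (B : Matrix (Fin n) (Fin m) ℝ)
    (hB : ∀ i l, B i l = if i = src l then (1 : ℝ) else if i = tgt l then -1 else 0)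
    (L : Matrix (Fin n) (Fin n) ℝ) (hL : L = B * Bᵀ)
    (Ldag : Matrix (Fin n) (Fin n) ℝ)
    (hd1 : L * Ldag * L = L) (hd2 : Ldag * L * Ldag = Ldag)
    (hd3 : (L * Ldag)ᵀ = L * Ldag) (hd4 : (Ldag * L)ᵀ = Ldag * L)
    (a b : ℝ) (ha : 0 < a) (hb : 0 < b)
    (ωu : Fin n → ℝ)
    (A : Matrix (Fin n ⊕ Fin n) (Fin n ⊕ Fin n) ℝ)
    (hA : A = Matrix.fromBlocks (-(a • L)) (b • (1 : Matrix (Fin n) (Fin n) ℝ)) (-L) 0)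
    (B2 : Matrix (Fin n ⊕ Fin n) (Fin n) ℝ)
    (hB2 : B2 = Matrix.fromRows (1 : Matrix (Fin n) (Fin n) ℝ) 0)
    (C1 : Matrix (Fin n) (Fin n ⊕ Fin n) ℝ)
    (hC1 : C1 = Matrix.fromCols (-(a • L)) (b • (1 : Matrix (Fin n) (Fin n) ℝ)))
    (C2 : Matrix (Fin m) (Fin n ⊕ Fin n) ℝ)
    (hC2 : C2 = Matrix.fromCols (-Bᵀ) 0)
    (x : ℝ → (Fin n ⊕ Fin n) → ℝ)
    (hx0 : x 0 = 0)
    (hx : ∀ t : ℝ, 0 ≤ t → HasDerivAt x (A *ᵥ x t + B2 *ᵥ ωu) t)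
    (ω : ℝ → Fin n → ℝ) (hω : ∀ t, ω t = C1 *ᵥ x t + ωu)
    (δ : ℝ → Fin m → ℝ) (hδ : ∀ t, δ t = C2 *ᵥ x t)
    (ωavg : ℝ) (hωavg : ωavg = (1 / (n : ℝ)) * ∑ i, ωu i)
    (ωss : Fin n → ℝ) (hωss : ωss = fun _ => ωavg)
    :
    IntegrableOn (fun t => ∑ l, (δ t l) ^ 2) (Set.Ioi (0 : ℝ)) ∧
      ∫ t in Set.Ioi (0 : ℝ), (∑ l, (δ t l) ^ 2) =
        (1 / (2 * a * b)) * (ωu ⬝ᵥ (Ldag *ᵥ ωu)) :=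
  stmt2_general n m B L hL Ldag hd1 hd2 hd3 hd4 a b ha hb ωu A hA B2 hB2 C2 hC2 x hx0 hx δ hδ
end

section
/- The matrix X₁ = [[ (a/2) L̂ + (b/(2a)) I, −(b/2) I ], [ −(b/2) I, (b²/(2a)) L̂⁻¹ ]] satisfies the Lyapunov equation Âᵀ X₁ + X₁ Â + Ĉ₁ᵀ Ĉ₁ = 0. -/
/-!
Put `M = L U₁`. Since `L 𝟏 = 0` and `[U₁, 𝟏]` is square with left inverse `[U₁ᵀ; 𝟏ᵀ / n]`,
`U₁ U₁ᵀ = I - 𝟏 𝟏ᵀ / n` and hence `L U₁ U₁ᵀ = L`; this gives `U₁ᵀ M = L̂` and `Mᵀ M = L̂²`.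
`L̂ = (Bᵀ U₁)ᵀ (Bᵀ U₁)` is positive definite: `Bᵀ U₁ x = 0` makes `U₁ x` constant along the
edges of the connected graph, so `U₁ x ∈ ℝ 𝟏` and `x = U₁ᵀ U₁ x = 0`. With these identities and
`L̂` symmetric and invertible, each of the four blocks of `Âᵀ X₁ + X₁ Â + Ĉ₁ᵀ Ĉ₁` cancels.
-/

open Matrix

section Incidence

variable {V E : Type*} [Fintype V] [DecidableEq V] {B : Matrix V E ℝ} {src tgt : E → V}

theorem incidence_transpose_mulVec_apply
    (hB : ∀ i l, B i l = if i = src l then (1 : ℝ) else if i = tgt l then -1 else 0)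
    {l : E} (hl : src l ≠ tgt l) (u : V → ℝ) :
    (Bᵀ *ᵥ u) l = u (src l) - u (tgt l) := by
  have hcol : (fun i => B i l) = Pi.single (src l) 1 - Pi.single (tgt l) 1 := by
    funext i
    rw [hB]
    by_cases hs : i = src l
    · subst hs; simp [hl]
    · by_cases ht : i = tgt l
      · subst ht; simp [hs]
      · simp [hs, ht]
  change (fun i => B i l) ⬝ᵥ u = _
  rw [hcol, sub_dotProduct, single_one_dotProduct, single_one_dotProduct]

theorem incidence_transpose_mulVec_one
    (hB : ∀ i l, B i l = if i = src l then (1 : ℝ) else if i = tgt l then -1 else 0)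
    (hloop : ∀ l, src l ≠ tgt l) : Bᵀ *ᵥ (fun _ => 1) = 0 := by
  funext l
  rw [incidence_transpose_mulVec_apply hB (hloop l), sub_self, Pi.zero_apply]

theorem exists_eq_const_of_incidence_transpose_mulVec_eq_zero
    (hB : ∀ i l, B i l = if i = src l then (1 : ℝ) else if i = tgt l then -1 else 0)
    (hloop : ∀ l, src l ≠ tgt l) {G : SimpleGraph V} (hG : G.Connected)
    (hsurj : ∀ e ∈ G.edgeSet, ∃ l, s(src l, tgt l) = e)
    {u : V → ℝ} (hu : Bᵀ *ᵥ u = 0) : ∃ c, u = fun _ => c := by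
  classical
  have hadj : ∀ i j, G.Adj i j → u i = u j := by
    intro i j hij
    obtain ⟨l, hl⟩ := hsurj _ (G.mem_edgeSet.mpr hij)
    have hedge : u (src l) = u (tgt l) := by
      rw [← sub_eq_zero, ← incidence_transpose_mulVec_apply hB (hloop l), hu, Pi.zero_apply]
    rcases Sym2.eq_iff.mp hl with ⟨rfl, rfl⟩ | ⟨rfl, rfl⟩
    exacts [hedge, hedge.symm]
  -- The Laplacian's kernel lemmas turn equality across edges into equality across walks.
  have hreach := G.lapMatrix_mulVec_eq_zero_iff_forall_reachable.mp
    (G.lapMatrix_mulVec_eq_zero_iff_forall_adj.mpr hadj)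
  obtain ⟨v⟩ := hG.nonempty
  exact ⟨u v, funext fun i => hreach i v (hG i v)⟩

end Incidence

section Completion

variable {ι κ : Type*} [Fintype ι] [Fintype κ] [DecidableEq ι] [DecidableEq κ]
  {U : Matrix ι κ ℝ}

theorem mul_transpose_add_replicateCol_mul_replicateRow_eq_one
    (hU : Uᵀ * U = 1) (hU1 : Uᵀ *ᵥ (fun _ => 1) = 0)
    (hcard : Fintype.card κ + 1 = Fintype.card ι) :
    U * Uᵀ + replicateCol (Fin 1) (fun _ : ι => (1 : ℝ)) *
      replicateRow (Fin 1) (fun _ : ι => (Fintype.card ι : ℝ)⁻¹) = 1 := by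
  set C := replicateCol (Fin 1) (fun _ : ι => (1 : ℝ))
  set R := replicateRow (Fin 1) (fun _ : ι => (Fintype.card ι : ℝ)⁻¹)
  have hUC : Uᵀ * C = 0 := by rw [← replicateCol_mulVec, hU1, replicateCol_zero]
  have hRU : R * U = 0 := by
    have hconst : (fun _ : ι => (Fintype.card ι : ℝ)⁻¹) =
        (Fintype.card ι : ℝ)⁻¹ • fun _ => 1 := by
      ext; simp
    rw [← replicateRow_vecMul, hconst, smul_vecMul, ← mulVec_transpose, hU1, smul_zero,
      replicateRow_zero]
  have hRC : R * C = 1 := by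
    have hι : (Fintype.card ι : ℝ) ≠ 0 := by rw [← hcard]; positivity
    ext i j
    fin_cases i; fin_cases j
    simp [R, C, dotProduct, hι]
  have e : ι ≃ κ ⊕ Fin 1 :=
    Fintype.equivOfCardEq (by rw [Fintype.card_sum, Fintype.card_fin, hcard])
  rw [← fromCols_mul_fromRows, fromCols_mul_fromRows_eq_one_comm e, fromRows_mul_fromCols,
    hU, hUC, hRU, hRC, fromBlocks_one]

theorem mul_mul_transpose_eq_self_of_mulVec_one_eq_zero
    (hU : Uᵀ * U = 1) (hU1 : Uᵀ *ᵥ (fun _ => 1) = 0)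
    (hcard : Fintype.card κ + 1 = Fintype.card ι) {L : Matrix ι ι ℝ}
    (hL : L *ᵥ (fun _ => 1) = 0) : L * (U * Uᵀ) = L := by
  have hproj := mul_transpose_add_replicateCol_mul_replicateRow_eq_one hU hU1 hcard
  rw [← eq_sub_iff_add_eq] at hproj
  rw [hproj, Matrix.mul_sub, Matrix.mul_one, ← Matrix.mul_assoc, ← replicateCol_mulVec, hL,
    replicateCol_zero, Matrix.zero_mul, sub_zero]

end Completion

theorem injective_transpose_mul_mulVec_of_ker_subset_const {ι κ E : Type*} [Fintype ι]
    [Fintype κ] [Fintype E] [DecidableEq κ] {B : Matrix ι E ℝ} {U : Matrix ι κ ℝ}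
    (hU : Uᵀ * U = 1) (hU1 : Uᵀ *ᵥ (fun _ => 1) = 0)
    (hker : ∀ u, Bᵀ *ᵥ u = 0 → ∃ c, u = fun _ => c) :
    Function.Injective (Bᵀ * U).mulVec := by
  intro x y hxy
  obtain ⟨c, hc⟩ := hker (U *ᵥ (x - y)) (by rw [mulVec_mulVec, mulVec_sub, hxy, sub_self])
  have hconst : (fun _ : ι => c) = c • fun _ => (1 : ℝ) := by ext; simp
  rw [← sub_eq_zero]
  calc x - y = (Uᵀ * U) *ᵥ (x - y) := by rw [hU, one_mulVec]
    _ = 0 := by rw [← mulVec_mulVec, hc, hconst, mulVec_smul, hU1, smul_zero]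

theorem fromBlocks_lyapunov_eq_zero {ι κ : Type*} [Fintype ι] [Fintype κ] [DecidableEq κ]
    {Lh : Matrix κ κ ℝ} {M U : Matrix ι κ ℝ} {a b : ℝ} (ha : a ≠ 0)
    (hsymm : Lhᵀ = Lh) (hdet : IsUnit Lh.det) (hU : Uᵀ * U = 1)
    (hUM : Uᵀ * M = Lh) (hMM : Mᵀ * M = Lh * Lh)
    {A X : Matrix (κ ⊕ κ) (κ ⊕ κ) ℝ} {C : Matrix ι (κ ⊕ κ) ℝ}
    (hA : A = fromBlocks (-(a • Lh)) (b • 1) (-Lh) 0)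
    (hC : C = fromCols (-(a • M)) (b • U))
    (hX : X = fromBlocks ((a / 2) • Lh + (b / (2 * a)) • 1) (-((b / 2) • 1))
      (-((b / 2) • 1)) ((b ^ 2 / (2 * a)) • Lh⁻¹)) :
    Aᵀ * X + X * A + Cᵀ * C = 0 := by
  have hMU : Mᵀ * U = Lh := by rw [← hsymm, ← hUM, transpose_mul, transpose_transpose]
  have hinv : Lh * Lh⁻¹ = 1 := mul_nonsing_inv _ hdet
  have hinv' : Lh⁻¹ * Lh = 1 := nonsing_inv_mul _ hdet
  subst hA hC hX
  rw [fromBlocks_transpose, fromBlocks_multiply, fromBlocks_multiply, transpose_fromCols,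
    fromRows_mul_fromCols, fromBlocks_add, fromBlocks_add, ← fromBlocks_zero, fromBlocks_inj]
  refine ⟨?_, ?_, ?_, ?_⟩ <;>
  · simp only [transpose_neg, transpose_smul, transpose_one, transpose_zero, hsymm,
      Matrix.neg_mul, Matrix.mul_neg, Matrix.mul_add, Matrix.add_mul, Matrix.smul_mul,
      Matrix.mul_smul, smul_add, smul_zero, hU, Matrix.mul_one, Matrix.one_mul, Matrix.zero_mul,
      Matrix.mul_zero, smul_smul, hinv, hinv', hMU, hUM, hMM, neg_neg, add_zero,
      smul_neg]
    match_scalars <;> field_simp <;> ring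

theorem stmt3_general
    (n m : ℕ) (hn : 2 ≤ n)
    (G : SimpleGraph (Fin n)) (hG : G.Connected)
    (src tgt : Fin m → Fin n)
    (hadj : ∀ l, G.Adj (src l) (tgt l))
    (hsurj : ∀ e ∈ G.edgeSet, ∃ l : Fin m, s(src l, tgt l) = e)
    (B : Matrix (Fin n) (Fin m) ℝ)
    (hB : ∀ i l, B i l = if i = src l then (1 : ℝ) else if i = tgt l then -1 else 0)
    (L : Matrix (Fin n) (Fin n) ℝ) (hL : L = B * Bᵀ)
    (U1 : Matrix (Fin n) (Fin (n - 1)) ℝ)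
    (hU1 : U1ᵀ * U1 = 1)
    (hU1one : U1ᵀ *ᵥ (fun _ => (1 : ℝ)) = 0)
    (Lhat : Matrix (Fin (n - 1)) (Fin (n - 1)) ℝ) (hLhat : Lhat = U1ᵀ * L * U1)
    (a b : ℝ) (ha : 0 < a)
    (Ahat : Matrix (Fin (n - 1) ⊕ Fin (n - 1)) (Fin (n - 1) ⊕ Fin (n - 1)) ℝ)
    (hAhat : Ahat = Matrix.fromBlocks (-(a • Lhat)) (b • (1 : Matrix (Fin (n - 1)) (Fin (n - 1)) ℝ)) (-Lhat) 0)
    (C1hat : Matrix (Fin n) (Fin (n - 1) ⊕ Fin (n - 1)) ℝ)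
    (hC1hat : C1hat = Matrix.fromCols (-(a • (L * U1))) (b • U1))
    (X1 : Matrix (Fin (n - 1) ⊕ Fin (n - 1)) (Fin (n - 1) ⊕ Fin (n - 1)) ℝ)
    (hX1 : X1 = Matrix.fromBlocks
      ((a / 2) • Lhat + (b / (2 * a)) • (1 : Matrix (Fin (n - 1)) (Fin (n - 1)) ℝ))
      (-((b / 2) • (1 : Matrix (Fin (n - 1)) (Fin (n - 1)) ℝ)))
      (-((b / 2) • (1 : Matrix (Fin (n - 1)) (Fin (n - 1)) ℝ)))
      ((b ^ 2 / (2 * a)) • Lhat⁻¹))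
    :
    Ahatᵀ * X1 + X1 * Ahat + C1hatᵀ * C1hat = 0 := by
  have hloop : ∀ l, src l ≠ tgt l := fun l => (hadj l).ne
  have hLsymm : Lᵀ = L := by rw [hL, transpose_mul, transpose_transpose]
  have hLone : L *ᵥ (fun _ => 1) = 0 := by
    rw [hL, ← mulVec_mulVec, incidence_transpose_mulVec_one hB hloop, mulVec_zero]
  have hLhat_posDef : Lhat.PosDef := by
    have hinj := injective_transpose_mul_mulVec_of_ker_subset_const hU1 hU1one fun _ hu =>
      exists_eq_const_of_incidence_transpose_mulVec_eq_zero hB hloop hG hsurj hu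
    have hLhat' : Lhat = (Bᵀ * U1)ᴴ * (Bᵀ * U1) := by
      rw [hLhat, hL, conjTranspose_eq_transpose_of_trivial, transpose_mul, transpose_transpose]
      simp only [Matrix.mul_assoc]
    exact hLhat' ▸ PosDef.conjTranspose_mul_self _ hinj
  have hproj : L * (U1 * U1ᵀ) = L :=
    mul_mul_transpose_eq_self_of_mulVec_one_eq_zero hU1 hU1one (by rw [Fintype.card_fin, Fintype.card_fin]; omega) hLone
  refine fromBlocks_lyapunov_eq_zero ha.ne' ?_
    ((isUnit_iff_isUnit_det _).mp hLhat_posDef.isUnit) hU1 (by rw [hLhat, Matrix.mul_assoc]) ?_ hAhat hC1hat hX1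
  · rw [← conjTranspose_eq_transpose_of_trivial, hLhat_posDef.isHermitian.eq]
  · calc (L * U1)ᵀ * (L * U1) = U1ᵀ * (L * (U1 * U1ᵀ)) * (L * U1) := by
          rw [hproj, transpose_mul, hLsymm]
      _ = Lhat * Lhat := by rw [hLhat]; simp only [Matrix.mul_assoc]

theorem stmt3
    (n m : ℕ) (hn : 2 ≤ n)
    (G : SimpleGraph (Fin n)) (hG : G.Connected)
    (src tgt : Fin m → Fin n)
    (hadj : ∀ l, G.Adj (src l) (tgt l))
    (hinj : ∀ l l' : Fin m, s(src l, tgt l) = s(src l', tgt l') → l = l')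
    (hsurj : ∀ e ∈ G.edgeSet, ∃ l : Fin m, s(src l, tgt l) = e)
    (B : Matrix (Fin n) (Fin m) ℝ)
    (hB : ∀ i l, B i l = if i = src l then (1 : ℝ) else if i = tgt l then -1 else 0)
    (L : Matrix (Fin n) (Fin n) ℝ) (hL : L = B * Bᵀ)
    (U1 : Matrix (Fin n) (Fin (n - 1)) ℝ)
    (hU1 : U1ᵀ * U1 = 1)
    (hU1one : U1ᵀ *ᵥ (fun _ => (1 : ℝ)) = 0)
    (Lhat : Matrix (Fin (n - 1)) (Fin (n - 1)) ℝ) (hLhat : Lhat = U1ᵀ * L * U1)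
    (a b : ℝ) (ha : 0 < a) (hb : 0 < b)
    (Ahat : Matrix (Fin (n - 1) ⊕ Fin (n - 1)) (Fin (n - 1) ⊕ Fin (n - 1)) ℝ)
    (hAhat : Ahat = Matrix.fromBlocks (-(a • Lhat)) (b • (1 : Matrix (Fin (n - 1)) (Fin (n - 1)) ℝ)) (-Lhat) 0)
    (C1hat : Matrix (Fin n) (Fin (n - 1) ⊕ Fin (n - 1)) ℝ)
    (hC1hat : C1hat = Matrix.fromCols (-(a • (L * U1))) (b • U1))
    (X1 : Matrix (Fin (n - 1) ⊕ Fin (n - 1)) (Fin (n - 1) ⊕ Fin (n - 1)) ℝ)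
    (hX1 : X1 = Matrix.fromBlocks
      ((a / 2) • Lhat + (b / (2 * a)) • (1 : Matrix (Fin (n - 1)) (Fin (n - 1)) ℝ))
      (-((b / 2) • (1 : Matrix (Fin (n - 1)) (Fin (n - 1)) ℝ)))
      (-((b / 2) • (1 : Matrix (Fin (n - 1)) (Fin (n - 1)) ℝ)))
      ((b ^ 2 / (2 * a)) • Lhat⁻¹))
    :
    Ahatᵀ * X1 + X1 * Ahat + C1hatᵀ * C1hat = 0 :=
  stmt3_general n m hn G hG src tgt hadj hsurj B hB L hL U1 hU1 hU1one Lhat hLhat a b ha Ahat hAhat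
    C1hat hC1hat X1 hX1
end

section
/- The matrix X₂ = [[ (1/(2a)) I, 0 ], [ 0, (b/(2a)) L̂⁻¹ ]] satisfies the Lyapunov equation Âᵀ X₂ + X₂ Â + Ĉ₂ᵀ Ĉ₂ = 0. -/
/-!
With `M = Bᵀ U₁` we have `L̂ = Mᵀ M`. On a connected graph `ker Bᵀ` consists of the constant
vectors, which `U₁` misses, so `M` is injective and `L̂` is positive definite, hence invertible.
The Lyapunov identity is then a blockwise computation in which only `L̂ L̂⁻¹ = 1` and
`Ĉ₂ᵀ Ĉ₂ = [[L̂, 0], [0, 0]]` are used.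
-/

open Matrix

theorem SimpleGraph.Connected.apply_eq_of_forall_adj {V α : Type*} {G : SimpleGraph V}
    (hG : G.Connected) {f : V → α} (hf : ∀ u w, G.Adj u w → f u = f w) (u w : V) :
    f u = f w := by
  obtain ⟨p⟩ := hG u w
  induction p with
  | nil => rfl
  | cons h _ ih => exact (hf _ _ h).trans ih

section Incidence

variable {V E : Type*} [Fintype V] [DecidableEq V]

def incidenceMatrix (src tgt : E → V) : Matrix V E ℝ :=
  Matrix.of fun i l => if i = src l then 1 else if i = tgt l then -1 else 0

namespace incidenceMatrix

theorem transpose_mulVec_apply {src tgt : E → V} {l : E} (hl : src l ≠ tgt l) (v : V → ℝ) :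
    ((incidenceMatrix src tgt)ᵀ *ᵥ v) l = v (src l) - v (tgt l) := by
  have hcol : (incidenceMatrix src tgt)ᵀ l = Pi.single (src l) 1 - Pi.single (tgt l) 1 := by
    ext i
    by_cases hs : i = src l <;> by_cases ht : i = tgt l <;> simp_all [incidenceMatrix]
  change (incidenceMatrix src tgt)ᵀ l ⬝ᵥ v = _
  simp [hcol, sub_dotProduct]

theorem apply_src_eq_apply_tgt {src tgt : E → V} {v : V → ℝ}
    (hv : (incidenceMatrix src tgt)ᵀ *ᵥ v = 0) (l : E) : v (src l) = v (tgt l) := by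
  by_cases hl : src l = tgt l
  · rw [hl]
  · have := congrFun hv l
    rw [transpose_mulVec_apply hl] at this
    exact sub_eq_zero.mp this

theorem apply_eq_of_transpose_mulVec_eq_zero {G : SimpleGraph V} (hG : G.Connected)
    {src tgt : E → V} (hsurj : ∀ e ∈ G.edgeSet, ∃ l, s(src l, tgt l) = e) {v : V → ℝ}
    (hv : (incidenceMatrix src tgt)ᵀ *ᵥ v = 0) (u w : V) : v u = v w := by
  refine hG.apply_eq_of_forall_adj (fun u w huw => ?_) u w
  obtain ⟨l, hl⟩ := hsurj s(u, w) huw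
  rcases Sym2.eq_iff.mp hl with ⟨rfl, rfl⟩ | ⟨rfl, rfl⟩
  · exact apply_src_eq_apply_tgt hv l
  · exact (apply_src_eq_apply_tgt hv l).symm

theorem mulVec_injective_transpose_mul {ι : Type*} [Fintype ι] [DecidableEq ι]
    {G : SimpleGraph V} (hG : G.Connected) {src tgt : E → V}
    (hsurj : ∀ e ∈ G.edgeSet, ∃ l, s(src l, tgt l) = e) {U : Matrix V ι ℝ}
    (hU : Uᵀ * U = 1) (hU_one : Uᵀ *ᵥ (fun _ => (1 : ℝ)) = 0) :
    Function.Injective ((incidenceMatrix src tgt)ᵀ * U).mulVec := by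
  intro x y hxy
  set v := U *ᵥ (x - y)
  have hv : (incidenceMatrix src tgt)ᵀ *ᵥ v = 0 := by
    simp only [v, mulVec_mulVec, mulVec_sub, hxy, sub_self]
  obtain ⟨i₀⟩ := hG.nonempty
  have hv_const : v = v i₀ • fun _ => (1 : ℝ) :=
    funext fun i => by simpa using apply_eq_of_transpose_mulVec_eq_zero hG hsurj hv i i₀
  refine sub_eq_zero.mp ?_
  calc x - y = (Uᵀ * U) *ᵥ (x - y) := by rw [hU, one_mulVec]
    _ = Uᵀ *ᵥ v := (mulVec_mulVec _ _ _).symm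
    _ = 0 := by rw [hv_const, mulVec_smul, hU_one, smul_zero]

end incidenceMatrix

end Incidence

theorem lyapunov_fromBlocks {ι κ : Type*} [Fintype ι] [DecidableEq ι] [Fintype κ]
    {M : Matrix κ ι ℝ} (hM : Function.Injective M.mulVec) {a : ℝ} (ha : a ≠ 0) (b : ℝ) :
    (fromBlocks (-(a • (Mᵀ * M))) (b • 1) (-(Mᵀ * M)) 0)ᵀ *
        fromBlocks ((1 / (2 * a)) • 1) 0 0 ((b / (2 * a)) • (Mᵀ * M)⁻¹) +
      fromBlocks ((1 / (2 * a)) • 1) 0 0 ((b / (2 * a)) • (Mᵀ * M)⁻¹) *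
        fromBlocks (-(a • (Mᵀ * M))) (b • 1) (-(Mᵀ * M)) 0 +
      (fromCols (-M) 0)ᵀ * fromCols (-M) 0 = 0 := by
  have hpos : (Mᵀ * M).PosDef := by
    simpa only [conjTranspose_eq_transpose_of_trivial] using PosDef.conjTranspose_mul_self M hM
  have hdet : IsUnit (Mᵀ * M).det := (isUnit_iff_isUnit_det _).mp hpos.isUnit
  have hsymm : (Mᵀ * M)ᵀ = Mᵀ * M := by rw [transpose_mul, transpose_transpose]
  rw [transpose_fromCols, fromRows_mul_fromCols, fromBlocks_transpose, fromBlocks_multiply,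
    fromBlocks_multiply, fromBlocks_add, fromBlocks_add, ← fromBlocks_zero, fromBlocks_inj]
  simp only [transpose_neg, transpose_smul, transpose_one, transpose_zero, hsymm,
    Matrix.neg_mul, Matrix.mul_neg, neg_neg, Matrix.smul_mul, Matrix.mul_smul, Matrix.one_mul,
    Matrix.mul_one, Matrix.zero_mul, Matrix.mul_zero, add_zero, zero_add, smul_smul,
    mul_nonsing_inv _ hdet, nonsing_inv_mul _ hdet]
  refine ⟨?_, ?_, ?_, by simp⟩ <;> match_scalars <;> field_simp <;> ring

theorem stmt4_general
    (n m : ℕ)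
    (G : SimpleGraph (Fin n)) (hG : G.Connected)
    (src tgt : Fin m → Fin n)
    (hsurj : ∀ e ∈ G.edgeSet, ∃ l : Fin m, s(src l, tgt l) = e)
    (B : Matrix (Fin n) (Fin m) ℝ)
    (hB : ∀ i l, B i l = if i = src l then (1 : ℝ) else if i = tgt l then -1 else 0)
    (L : Matrix (Fin n) (Fin n) ℝ) (hL : L = B * Bᵀ)
    (U1 : Matrix (Fin n) (Fin (n - 1)) ℝ)
    (hU1 : U1ᵀ * U1 = 1)
    (hU1one : U1ᵀ *ᵥ (fun _ => (1 : ℝ)) = 0)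
    (Lhat : Matrix (Fin (n - 1)) (Fin (n - 1)) ℝ) (hLhat : Lhat = U1ᵀ * L * U1)
    (a b : ℝ) (ha : 0 < a)
    (Ahat : Matrix (Fin (n - 1) ⊕ Fin (n - 1)) (Fin (n - 1) ⊕ Fin (n - 1)) ℝ)
    (hAhat : Ahat = Matrix.fromBlocks (-(a • Lhat)) (b • (1 : Matrix (Fin (n - 1)) (Fin (n - 1)) ℝ)) (-Lhat) 0)
    (C2hat : Matrix (Fin m) (Fin (n - 1) ⊕ Fin (n - 1)) ℝ)
    (hC2hat : C2hat = Matrix.fromCols (-(Bᵀ * U1)) 0)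
    (X2 : Matrix (Fin (n - 1) ⊕ Fin (n - 1)) (Fin (n - 1) ⊕ Fin (n - 1)) ℝ)
    (hX2 : X2 = Matrix.fromBlocks
      ((1 / (2 * a)) • (1 : Matrix (Fin (n - 1)) (Fin (n - 1)) ℝ)) 0 0
      ((b / (2 * a)) • Lhat⁻¹))
    :
    Ahatᵀ * X2 + X2 * Ahat + C2hatᵀ * C2hat = 0 := by
  have hB_inc : B = incidenceMatrix src tgt := Matrix.ext hB
  have hLhat_gram : Lhat = (Bᵀ * U1)ᵀ * (Bᵀ * U1) := by
    rw [hLhat, hL, transpose_mul, transpose_transpose, Matrix.mul_assoc, Matrix.mul_assoc,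
      Matrix.mul_assoc]
  have hinj : Function.Injective (Bᵀ * U1).mulVec := by
    rw [hB_inc]
    exact incidenceMatrix.mulVec_injective_transpose_mul hG hsurj hU1 hU1one
  rw [hAhat, hC2hat, hX2, hLhat_gram]
  exact lyapunov_fromBlocks hinj ha.ne' b

theorem stmt4
    (n m : ℕ) (hn : 2 ≤ n)
    (G : SimpleGraph (Fin n)) (hG : G.Connected)
    (src tgt : Fin m → Fin n)
    (hadj : ∀ l, G.Adj (src l) (tgt l))
    (hinj : ∀ l l' : Fin m, s(src l, tgt l) = s(src l', tgt l') → l = l')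
    (hsurj : ∀ e ∈ G.edgeSet, ∃ l : Fin m, s(src l, tgt l) = e)
    (B : Matrix (Fin n) (Fin m) ℝ)
    (hB : ∀ i l, B i l = if i = src l then (1 : ℝ) else if i = tgt l then -1 else 0)
    (L : Matrix (Fin n) (Fin n) ℝ) (hL : L = B * Bᵀ)
    (U1 : Matrix (Fin n) (Fin (n - 1)) ℝ)
    (hU1 : U1ᵀ * U1 = 1)
    (hU1one : U1ᵀ *ᵥ (fun _ => (1 : ℝ)) = 0)
    (Lhat : Matrix (Fin (n - 1)) (Fin (n - 1)) ℝ) (hLhat : Lhat = U1ᵀ * L * U1)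
    (a b : ℝ) (ha : 0 < a) (hb : 0 < b)
    (Ahat : Matrix (Fin (n - 1) ⊕ Fin (n - 1)) (Fin (n - 1) ⊕ Fin (n - 1)) ℝ)
    (hAhat : Ahat = Matrix.fromBlocks (-(a • Lhat)) (b • (1 : Matrix (Fin (n - 1)) (Fin (n - 1)) ℝ)) (-Lhat) 0)
    (C2hat : Matrix (Fin m) (Fin (n - 1) ⊕ Fin (n - 1)) ℝ)
    (hC2hat : C2hat = Matrix.fromCols (-(Bᵀ * U1)) 0)
    (X2 : Matrix (Fin (n - 1) ⊕ Fin (n - 1)) (Fin (n - 1) ⊕ Fin (n - 1)) ℝ)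
    (hX2 : X2 = Matrix.fromBlocks
      ((1 / (2 * a)) • (1 : Matrix (Fin (n - 1)) (Fin (n - 1)) ℝ)) 0 0
      ((b / (2 * a)) • Lhat⁻¹))
    :
    Ahatᵀ * X2 + X2 * Ahat + C2hatᵀ * C2hat = 0 :=
  stmt4_general n m G hG src tgt hsurj B hB L hL U1 hU1 hU1one Lhat hLhat a b ha Ahat hAhat C2hat
    hC2hat X2 hX2
end
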